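/- Let λ > 0, μ > 0, and q ∈ ℝ. Suppose α, β : [0,∞) × [0,1] → ℝ are continuously differentiable and satisfy the transport equations α_t(t,x) + λ α_x(t,x) = 0 and β_t(t,x) − μ β_x(t,x) = 0 for all t ≥ 0 and x ∈ [0,1], together with the boundary conditions α(t,0) = q β(t,0) and β(t,1) = 0 for all t ≥ 0. Then β(t,x) = 0 for all t ≥ (1−x)/μ, and α(t,x) = β(t,x) = 0 for all x ∈ [0,1] whenever t ≥ 1/λ + 1/μ; that is, the target system is finite-time stable with settling time t_F = 1/λ + 1/μ. -/

import Mathlib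

/-!
A solution of the transport equation `f_t = c f_x` is constant along each characteristic line
`s ↦ (t - s, x + c s)`: the derivative along the line is `-f_t + c f_x = 0`. Following the
characteristic of `β` (speed `-μ`) back from `(t, x)` reaches the actuated boundary `x = 1`,
where `β` vanishes, at time `t - (1 - x)/μ`; following that of `α` (speed `λ`) back reaches
`x = 0` at time `t - x/λ`, where `α = q β` and `β(·, 0)` has vanished once `t - x/λ ≥ 1/μ`.
-/

open Set Filter Asymptotics Topology ContinuousLinearMap

theorem hasFDerivWithinAt_uncurry_coprod
    {E₁ E₂ F : Type*} [NormedAddCommGroup E₁] [NormedSpace ℝ E₁] [NormedAddCommGroup E₂]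
    [NormedSpace ℝ E₂] [NormedAddCommGroup F] [NormedSpace ℝ F]
    {f : E₁ → E₂ → F} {f₁ : E₁ → E₂ → E₁ →L[ℝ] F} {f₂' : E₂ →L[ℝ] F}
    {s₁ : Set E₁} {s₂ : Set E₂} {u : E₁ × E₂} (hs₁ : Convex ℝ s₁) (hu : u ∈ s₁ ×ˢ s₂)
    (df₁ : ∀ v ∈ s₁ ×ˢ s₂, HasFDerivWithinAt (f · v.2) (f₁ v.1 v.2) s₁ v.1)
    (df₂ : HasFDerivWithinAt (f u.1 ·) f₂' s₂ u.2)
    (cf₁ : ContinuousWithinAt ↿f₁ (s₁ ×ˢ s₂) u) :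
    HasFDerivWithinAt ↿f ((f₁ u.1 u.2).coprod f₂') (s₁ ×ˢ s₂) u := by
  have h₁ : (fun v : E₁ × E₂ => f v.1 v.2 - f u.1 v.2 - f₁ u.1 u.2 (v.1 - u.1))
      =o[𝓝[s₁ ×ˢ s₂] u] (fun v => v.1 - u.1) := by
    refine isLittleO_iff.2 fun ε hε => ?_
    obtain ⟨δ, hδ, hf₁⟩ := Metric.continuousWithinAt_iff.1 cf₁ ε hε
    filter_upwards [self_mem_nhdsWithin, nhdsWithin_le_nhds (Metric.ball_mem_nhds u hδ)]
      with v hv hvu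
    have hball : ∀ x ∈ s₁ ∩ Metric.ball u.1 δ, dist (x, v.2) u < δ := fun x hx =>
      max_lt hx.2 ((le_max_right _ _).trans_lt hvu)
    refine (hs₁.inter (convex_ball _ _)).norm_image_sub_le_of_norm_hasFDerivWithin_le'
      (f := (f · v.2)) (f' := (f₁ · v.2))
      (fun x hx => (df₁ (x, v.2) ⟨hx.1, hv.2⟩).mono inter_subset_left)
      (fun x hx => ?_) ⟨hu.1, Metric.mem_ball_self hδ⟩
      ⟨hv.1, show dist v.1 u.1 < δ from (le_max_left _ _).trans_lt hvu⟩
    rw [← dist_eq_norm]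
    exact (hf₁ (x := (x, v.2)) ⟨hx.1, hv.2⟩ (hball x hx)).le
  have h₂ : (fun v : E₁ × E₂ => f u.1 v.2 - f u.1 u.2 - f₂' (v.2 - u.2))
      =o[𝓝[s₁ ×ˢ s₂] u] (fun v => v.2 - u.2) :=
    df₂.isLittleO.comp_tendsto (tendsto_nhdsWithin_of_tendsto_nhds_of_eventually_within _
      continuous_snd.continuousWithinAt.tendsto
      (eventually_mem_nhdsWithin.mono fun v hv => hv.2))
  refine HasFDerivWithinAt.of_isLittleO <|
    ((h₁.trans_isBigO (isBigO_of_le _ fun v => norm_fst_le (v - u))).add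
      (h₂.trans_isBigO (isBigO_of_le _ fun v => norm_snd_le (v - u)))).congr_left fun v => ?_
  change _ = f v.1 v.2 - f u.1 u.2 - _
  simp only [coprod_apply, Prod.fst_sub, Prod.snd_sub]
  abel

theorem Convex.apply_add_eq_of_hasFDerivWithinAt_apply_eq_zero
    {E G : Type*} [NormedAddCommGroup E] [NormedSpace ℝ E] [NormedAddCommGroup G]
    [NormedSpace ℝ G] {F : E → G} {F' : E → E →L[ℝ] G} {D : Set E} (hD : Convex ℝ D)
    (hF : ∀ p ∈ D, HasFDerivWithinAt F (F' p) D p) {p d : E} (hd : ∀ p ∈ D, F' p d = 0)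
    (hp : p ∈ D) (hpd : p + d ∈ D) : F (p + d) = F p := by
  have hmaps : MapsTo (fun θ : ℝ => p + θ • d) (Icc 0 1) D := fun _ hθ =>
    hD.add_smul_mem hp hpd hθ
  have hg : ∀ θ ∈ Icc (0 : ℝ) 1, HasDerivWithinAt (fun θ : ℝ => F (p + θ • d)) 0 (Icc 0 1) θ := by
    intro θ hθ
    have hline : HasDerivWithinAt (fun θ : ℝ => p + θ • d) d (Icc 0 1) θ := by
      simpa using (((hasDerivAt_id θ).smul_const d).const_add p).hasDerivWithinAt
    have := (hF _ (hmaps hθ)).comp_hasDerivWithinAt θ hline hmaps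
    rwa [hd _ (hmaps hθ)] at this
  have := (convex_Icc (0 : ℝ) 1).norm_image_sub_le_of_norm_hasDerivWithin_le hg
    (fun _ _ => norm_zero.le) (left_mem_Icc.2 zero_le_one) (right_mem_Icc.2 zero_le_one)
  simpa [sub_eq_zero] using this

theorem eq_along_characteristic_of_transport {F : Type*} [NormedAddCommGroup F] [NormedSpace ℝ F]
    {f ft fx : ℝ → ℝ → F} {s₁ s₂ : Set ℝ} (hs₁ : Convex ℝ s₁) (hs₂ : Convex ℝ s₂) (c : ℝ)
    (hft : ∀ t ∈ s₁, ∀ x ∈ s₂, HasDerivWithinAt (f · x) (ft t x) s₁ t)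
    (hfx : ∀ t ∈ s₁, ∀ x ∈ s₂, HasDerivWithinAt (f t ·) (fx t x) s₂ x)
    (hft_cont : ContinuousOn (fun p : ℝ × ℝ => ft p.1 p.2) (s₁ ×ˢ s₂))
    (hpde : ∀ t ∈ s₁, ∀ x ∈ s₂, ft t x = c • fx t x)
    {t x S : ℝ} (h₀ : (t, x) ∈ s₁ ×ˢ s₂) (h₁ : (t - S, x + c * S) ∈ s₁ ×ˢ s₂) :
    f (t - S) (x + c * S) = f t x := by
  have hF : ∀ p ∈ s₁ ×ˢ s₂, HasFDerivWithinAt ↿f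
      ((toSpanSingleton ℝ (ft p.1 p.2)).coprod (toSpanSingleton ℝ (fx p.1 p.2))) (s₁ ×ˢ s₂) p :=
    fun p hp => hasFDerivWithinAt_uncurry_coprod (f₁ := fun t x => toSpanSingleton ℝ (ft t x))
      hs₁ hp (fun v hv => (hft _ hv.1 _ hv.2).hasFDerivWithinAt)
      (hfx _ hp.1 _ hp.2).hasFDerivWithinAt
      (toSpanSingletonCLE.continuous.comp_continuousOn hft_cont p hp)
  have := (hs₁.prod hs₂).apply_add_eq_of_hasFDerivWithinAt_apply_eq_zero hF (d := (-S, c * S))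
    (fun p hp => ?_) h₀ (by simpa [sub_eq_add_neg] using h₁)
  · rw [sub_eq_add_neg]
    exact this
  · simp only [coprod_apply, toSpanSingleton_apply, hpde _ hp.1 _ hp.2]
    module

theorem two_by_two_target_finite_time
    (lam mu q : ℝ) (hlam : 0 < lam) (hmu : 0 < mu)
    (α β αt αx βt βx : ℝ → ℝ → ℝ)
    -- α and β are continuously differentiable on [0,∞) × [0,1]
    (hαt : ∀ t : ℝ, 0 ≤ t → ∀ x ∈ Icc (0:ℝ) 1,
      HasDerivWithinAt (fun s => α s x) (αt t x) (Ici 0) t)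
    (hαx : ∀ t : ℝ, 0 ≤ t → ∀ x ∈ Icc (0:ℝ) 1,
      HasDerivWithinAt (fun y => α t y) (αx t x) (Icc 0 1) x)
    (hβt : ∀ t : ℝ, 0 ≤ t → ∀ x ∈ Icc (0:ℝ) 1,
      HasDerivWithinAt (fun s => β s x) (βt t x) (Ici 0) t)
    (hβx : ∀ t : ℝ, 0 ≤ t → ∀ x ∈ Icc (0:ℝ) 1,
      HasDerivWithinAt (fun y => β t y) (βx t x) (Icc 0 1) x)
    (hαt_cont : ContinuousOn (fun p : ℝ × ℝ => αt p.1 p.2) (Ici 0 ×ˢ Icc 0 1))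
    (hβt_cont : ContinuousOn (fun p : ℝ × ℝ => βt p.1 p.2) (Ici 0 ×ˢ Icc 0 1))
    -- the transport equations  α_t + λ α_x = 0  and  β_t − μ β_x = 0
    (hα_pde : ∀ t : ℝ, 0 ≤ t → ∀ x ∈ Icc (0:ℝ) 1, αt t x + lam * αx t x = 0)
    (hβ_pde : ∀ t : ℝ, 0 ≤ t → ∀ x ∈ Icc (0:ℝ) 1, βt t x - mu * βx t x = 0)
    -- the boundary conditions  α(t,0) = q β(t,0)  and  β(t,1) = 0
    (hbc0 : ∀ t : ℝ, 0 ≤ t → α t 0 = q * β t 0)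
    (hbc1 : ∀ t : ℝ, 0 ≤ t → β t 1 = 0) :
    (∀ t : ℝ, ∀ x ∈ Icc (0:ℝ) 1, (1 - x) / mu ≤ t → β t x = 0) ∧
    (∀ t : ℝ, 1 / lam + 1 / mu ≤ t → ∀ x ∈ Icc (0:ℝ) 1, α t x = 0 ∧ β t x = 0) := by
  have hβ : ∀ t : ℝ, ∀ x ∈ Icc (0:ℝ) 1, (1 - x) / mu ≤ t → β t x = 0 := by
    intro t x hx ht
    have hend : x + mu * ((1 - x) / mu) = 1 := by field_simp; ring
    have hS : 0 ≤ (1 - x) / mu := div_nonneg (sub_nonneg.2 hx.2) hmu.le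
    have := eq_along_characteristic_of_transport (convex_Ici 0) (convex_Icc 0 1) mu
      hβt hβx hβt_cont (t := t) (S := (1 - x) / mu)
      (fun t ht x hx => by rw [smul_eq_mul]; linarith [hβ_pde t ht x hx]) ⟨hS.trans ht, hx⟩
      (by rw [hend]; exact ⟨sub_nonneg.2 ht, right_mem_Icc.2 zero_le_one⟩)
    rw [← this, hend, hbc1 _ (sub_nonneg.2 ht)]
  refine ⟨hβ, fun t ht x hx => ⟨?_, hβ t x hx ?_⟩⟩
  · have hend : x + -lam * (x / lam) = 0 := by field_simp; ring
    have hS : x / lam ≤ 1 / lam := div_le_div_of_nonneg_right hx.2 hlam.le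
    have hinv : 0 < 1 / lam ∧ 0 < 1 / mu := ⟨by positivity, by positivity⟩
    have := eq_along_characteristic_of_transport (convex_Ici 0) (convex_Icc 0 1) (-lam)
      hαt hαx hαt_cont (t := t) (S := x / lam)
      (fun t ht x hx => by rw [smul_eq_mul]; linarith [hα_pde t ht x hx])
      ⟨mem_Ici.2 (by linarith), hx⟩
      (by rw [hend]; exact ⟨mem_Ici.2 (by linarith), left_mem_Icc.2 zero_le_one⟩)
    rw [← this, hend, hbc0 _ (by linarith),
      hβ _ 0 (left_mem_Icc.2 zero_le_one) (by linarith), mul_zero]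
  · calc (1 - x) / mu ≤ 1 / mu := by gcongr; linarith [hx.1]
      _ ≤ t := by linarith [one_div_pos.2 hlam]
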